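/- arXiv:2305.17831 — 4 statements merged into one kernel-verified Lean document; each statement's English description precedes it below -/
import Mathlib

section
/- If λ ∈ ℝ^n has all entries strictly positive, then for any distinct indices i ≠ j and 1 ≤ l < n: S_{n-2;ij}(λ) · S_l(λ) − S_n(λ) · S_{l-2;ij}(λ) > 0, where S_{m;ij} denotes S_m with λ_i and λ_j both set to 0 (and S_m := 0 for m < 0, S_0 := 1). -/
open Finset

/-- `S m lam` : the `m`-th elementary symmetric function of the entries of `lam`,
with the conventions `S 0 = 1` and `S m = 0` for `m < 0` (and for `m > n`). -/
noncomputable def S {n : ℕ} (m : ℤ) (lam : Fin n → ℝ) : ℝ :=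
  if 0 ≤ m then
    ∑ A ∈ Finset.powersetCard m.toNat (Finset.univ : Finset (Fin n)), ∏ j ∈ A, lam j
  else 0

/-!
Write the entries of `lam` as the multiset `lam i ::ₘ lam j ::ₘ s`, where `s` collects the other
`n - 2` entries, and put `P = ∏ s`. Zeroing `lam i` and `lam j` turns `S m` into `e_m(s)`, so
`S (n - 2)` of the updated vector is `P` and `S n lam = lam i * lam j * P`. Expanding
`S l lam = e_l(s) + (lam i + lam j) e_{l-1}(s) + lam i * lam j * e_{l-2}(s)`, the terms with
`lam i * lam j` cancel and the difference is `P (e_l(s) + (lam i + lam j) e_{l-1}(s))`, which is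
positive because `l - 1 ≤ n - 2 = card s`.
-/

namespace Multiset

section CommSemiring

variable {R : Type*} [CommSemiring R]

@[simp]
theorem esymm_zero_right (s : Multiset R) : s.esymm 0 = 1 := by
  simp [esymm]

theorem esymm_cons_succ (a : R) (s : Multiset R) (k : ℕ) :
    (a ::ₘ s).esymm (k + 1) = s.esymm (k + 1) + a * s.esymm k := by
  simp [esymm, map_map, sum_map_mul_left]

theorem esymm_zero_cons (s : Multiset R) (k : ℕ) : (0 ::ₘ s).esymm k = s.esymm k := by
  cases k <;> simp [esymm_cons_succ]

theorem esymm_cons_cons_add_two (a b : R) (s : Multiset R) (k : ℕ) :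
    (a ::ₘ b ::ₘ s).esymm (k + 2) =
      s.esymm (k + 2) + (a + b) * s.esymm (k + 1) + a * b * s.esymm k := by
  rw [esymm_cons_succ, esymm_cons_succ, esymm_cons_succ]
  ring

theorem esymm_card (s : Multiset R) : s.esymm (card s) = s.prod := by
  simp [esymm]

end CommSemiring

section Ordered

variable {R : Type*} [CommSemiring R] [PartialOrder R] [IsStrictOrderedRing R] {s : Multiset R}

theorem esymm_nonneg (hs : ∀ x ∈ s, 0 ≤ x) (k : ℕ) : 0 ≤ s.esymm k :=
  sum_nonneg fun _ hx ↦ by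
    obtain ⟨t, ht, rfl⟩ := mem_map.1 hx
    exact prod_nonneg fun x hx ↦ hs x (subset_of_le (mem_powersetCard.1 ht).1 hx)

theorem esymm_pos (hs : ∀ x ∈ s, 0 < x) {k : ℕ} (hk : k ≤ card s) : 0 < s.esymm k := by
  have hne : s.powersetCard k ≠ 0 := by
    rw [← card_pos, card_powersetCard]
    exact Nat.choose_pos hk
  simpa [esymm] using sum_lt_sum_of_nonempty (f := fun _ ↦ (0 : R)) (g := prod) hne fun t ht ↦
    prod_pos fun x hx ↦ hs x (subset_of_le (mem_powersetCard.1 ht).1 hx)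

end Ordered

theorem prod_mul_esymm_cons_cons_sub_pos {R : Type*} [CommRing R] [PartialOrder R]
    [IsStrictOrderedRing R] {a b : R} {s : Multiset R} (hab : 0 < a + b)
    (hs : ∀ x ∈ s, 0 < x) {k : ℕ} (hk : k + 1 ≤ card s) :
    0 < s.prod * (a ::ₘ b ::ₘ s).esymm (k + 2) - (a ::ₘ b ::ₘ s).prod * s.esymm k := by
  have key : s.prod * (a ::ₘ b ::ₘ s).esymm (k + 2) - (a ::ₘ b ::ₘ s).prod * s.esymm k =
      s.prod * (s.esymm (k + 2) + (a + b) * s.esymm (k + 1)) := by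
    rw [esymm_cons_cons_add_two, prod_cons, prod_cons]
    ring
  rw [key]
  exact mul_pos (prod_pos hs) (add_pos_of_nonneg_of_pos (esymm_nonneg (fun x hx ↦ (hs x hx).le) _)
    (mul_pos hab (esymm_pos hs hk)))

end Multiset

theorem Finset.map_val_eq_cons_cons {α β : Type*} [DecidableEq α] (f : α → β) {s : Finset α}
    {i j : α} (hi : i ∈ s) (hj : j ∈ s) (hij : i ≠ j) :
    s.val.map f = f i ::ₘ f j ::ₘ ((s.erase i).erase j).val.map f := by
  rw [← Multiset.map_cons, ← Multiset.map_cons, erase_val, erase_val,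
    Multiset.cons_erase (Multiset.mem_erase_of_ne hij.symm |>.2 hj), Multiset.cons_erase hi]

theorem Finset.map_val_update_update {α β : Type*} [DecidableEq α] (f : α → β) {s : Finset α}
    {i j : α} (hi : i ∈ s) (hj : j ∈ s) (hij : i ≠ j) (a b : β) :
    s.val.map (Function.update (Function.update f i a) j b) =
      a ::ₘ b ::ₘ ((s.erase i).erase j).val.map f := by
  rw [map_val_eq_cons_cons _ hi hj hij, Function.update_self,
    Function.update_of_ne hij, Function.update_self]
  refine congrArg _ (congrArg _ (Multiset.map_congr rfl fun k hk ↦ ?_))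
  rw [mem_val, mem_erase, mem_erase] at hk
  rw [Function.update_of_ne hk.1, Function.update_of_ne hk.2.1]

theorem S_of_nonneg {n : ℕ} {m : ℤ} (hm : 0 ≤ m) (lam : Fin n → ℝ) :
    S m lam = (univ.val.map lam).esymm m.toNat := by
  rw [S, if_pos hm, Finset.esymm_map_val]

theorem S_of_neg {n : ℕ} {m : ℤ} (hm : m < 0) (lam : Fin n → ℝ) : S m lam = 0 :=
  if_neg hm.not_ge

theorem stmt4_general (n : ℕ) (lam : Fin n → ℝ) (hpos : ∀ i, 0 < lam i)
    (i j : Fin n) (hij : i ≠ j) (l : ℤ) (hl1 : 1 ≤ l) (hln : l < n) :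
    0 < S ((n : ℤ) - 2) (Function.update (Function.update lam i 0) j 0) * S l lam
        - S (n : ℤ) lam * S (l - 2) (Function.update (Function.update lam i 0) j 0) := by
  set s := ((univ.erase i).erase j).val.map lam
  have hs_card : Multiset.card s = n - 2 := by
    rw [Multiset.card_map, card_val, card_erase_of_mem (mem_erase.2 ⟨hij.symm, mem_univ j⟩),
      card_erase_of_mem (mem_univ i), card_univ, Fintype.card_fin]
    omega
  have hs_pos : ∀ x ∈ s, 0 < x := Multiset.forall_mem_map_iff.2 fun k _ ↦ hpos k
  have hSμ (m : ℤ) (hm : 0 ≤ m) :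
      S m (Function.update (Function.update lam i 0) j 0) = s.esymm m.toNat := by
    rw [S_of_nonneg hm, map_val_update_update _ (mem_univ i) (mem_univ j) hij,
      Multiset.esymm_zero_cons, Multiset.esymm_zero_cons]
  have hSlam (m : ℤ) (hm : 0 ≤ m) : S m lam = (lam i ::ₘ lam j ::ₘ s).esymm m.toNat := by
    rw [S_of_nonneg hm, map_val_eq_cons_cons _ (mem_univ i) (mem_univ j) hij]
  obtain ⟨k, rfl⟩ : ∃ k : ℕ, l = k + 1 := ⟨(l - 1).toNat, by omega⟩
  rw [hSμ (n - 2) (by omega), hSlam n (by omega), hSlam (k + 1) (by omega),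
    show ((n : ℤ) - 2).toNat = Multiset.card s by omega,
    show (n : ℤ).toNat = Multiset.card (lam i ::ₘ lam j ::ₘ s) by rw [Multiset.card_cons, Multiset.card_cons]; omega,
    show ((k : ℤ) + 1).toNat = k + 1 by omega, Multiset.esymm_card, Multiset.esymm_card]
  rcases k with _ | k
  · rw [S_of_neg (show ((0 : ℕ) : ℤ) + 1 - 2 < 0 by omega), mul_zero, sub_zero]
    exact mul_pos (Multiset.prod_pos hs_pos) (Multiset.esymm_pos
      (Multiset.forall_mem_cons.2 ⟨hpos i, Multiset.forall_mem_cons.2 ⟨hpos j, hs_pos⟩⟩) (by simp))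
  · rw [hSμ _ (by omega), show ((k + 1 : ℕ) + 1 - 2 : ℤ).toNat = k by omega]
    exact Multiset.prod_mul_esymm_cons_cons_sub_pos (add_pos (hpos i) (hpos j)) hs_pos (by omega)

theorem stmt4 (n : ℕ) (hn : 2 ≤ n) (lam : Fin n → ℝ) (hpos : ∀ i, 0 < lam i)
    (i j : Fin n) (hij : i ≠ j) (l : ℤ) (hl1 : 1 ≤ l) (hln : l < n) :
    0 < S ((n : ℤ) - 2) (Function.update (Function.update lam i 0) j 0) * S l lam
        - S (n : ℤ) lam * S (l - 2) (Function.update (Function.update lam i 0) j 0) :=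
  stmt4_general n lam hpos i j hij l hl1 hln
end

section
/- If λ_1 ≥ λ_2 ≥ ... ≥ λ_n > 0, then (n−1) · S_{n-1;n}(λ) · S_{l;n}(λ) ≥ Σ_{i=1}^{n-1} S_{n-1;i}(λ) · S_{l;i}(λ), where S_{m;i} denotes S_m with λ_i set to 0. -/
open Finset

lemma S_nonneg {n : ℕ} (m : ℤ) {lam : Fin n → ℝ} (h : ∀ i, 0 ≤ lam i) : 0 ≤ S m lam := by
  unfold S; split
  · exact Finset.sum_nonneg fun A _ => Finset.prod_nonneg fun j _ => h j
  · exact le_refl _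

lemma S_mono {n : ℕ} (m : ℤ) {lam mu : Fin n → ℝ} (h0 : ∀ i, 0 ≤ lam i)
    (h : ∀ i, lam i ≤ mu i) : S m lam ≤ S m mu := by
  unfold S; split
  · exact Finset.sum_le_sum fun A _ =>
      Finset.prod_le_prod (fun j _ => h0 j) (fun j _ => h j)
  · exact le_refl _

lemma S_comp_perm {n : ℕ} (m : ℤ) (lam : Fin n → ℝ) (σ : Equiv.Perm (Fin n)) :
    S m (lam ∘ σ) = S m lam := by
  unfold S; split
  · refine Finset.sum_nbij' (fun A => A.map σ.toEmbedding)
      (fun A => A.map σ.symm.toEmbedding) ?_ ?_ ?_ ?_ ?_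
    · intro A hA
      simp only [Finset.mem_powersetCard] at hA ⊢
      exact ⟨Finset.subset_univ _, by simp [hA.2]⟩
    · intro A hA
      simp only [Finset.mem_powersetCard] at hA ⊢
      exact ⟨Finset.subset_univ _, by simp [hA.2]⟩
    · intro A _; ext x; simp
    · intro A _; ext x; simp
    · intro A _
      rw [Finset.prod_map]
      rfl
  · rfl

theorem stmt5 (m : ℕ) (hm : 1 ≤ m) (lam : Fin (m + 1) → ℝ)
    (hdec : ∀ i j : Fin (m + 1), i ≤ j → lam j ≤ lam i) (hpos : ∀ i, 0 < lam i)
    (l : ℤ) (hl0 : 0 ≤ l) (hln : l < m + 1) :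
    ∑ i ∈ Finset.univ.erase (Fin.last m),
        S (m : ℤ) (Function.update lam i 0) * S l (Function.update lam i 0)
      ≤ (m : ℝ) * (S (m : ℤ) (Function.update lam (Fin.last m) 0)
          * S l (Function.update lam (Fin.last m) 0)) := by
  have hnn : ∀ i : Fin (m+1), ∀ j, 0 ≤ Function.update lam i 0 j := by
    intro i j
    by_cases hj : j = i
    · subst hj; simp
    · rw [Function.update_of_ne hj]; exact (hpos j).le
  have key : ∀ i : Fin (m+1), i ≠ Fin.last m → ∀ k : ℤ,
      S k (Function.update lam i 0) ≤ S k (Function.update lam (Fin.last m) 0) := by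
    intro i hi k
    have hσ := S_comp_perm k (Function.update lam (Fin.last m) 0) (Equiv.swap i (Fin.last m))
    rw [← hσ]
    apply S_mono _ (hnn i)
    intro j
    simp only [Function.comp_apply]
    by_cases hj : j = i
    · subst hj
      rw [Equiv.swap_apply_left, Function.update_self, Function.update_self]
    · by_cases hj' : j = Fin.last m
      · subst hj'
        rw [Equiv.swap_apply_right, Function.update_of_ne hj,
          Function.update_of_ne hi]
        exact hdec i (Fin.last m) (Fin.le_last i)
      · rw [Equiv.swap_apply_of_ne_of_ne hj hj', Function.update_of_ne hj,
          Function.update_of_ne hj']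
  have hbound : ∀ i ∈ Finset.univ.erase (Fin.last m),
      S (m : ℤ) (Function.update lam i 0) * S l (Function.update lam i 0)
        ≤ S (m : ℤ) (Function.update lam (Fin.last m) 0)
            * S l (Function.update lam (Fin.last m) 0) := by
    intro i hi
    have hi' := Finset.ne_of_mem_erase hi
    exact mul_le_mul (key i hi' m) (key i hi' l) (S_nonneg l (hnn i))
      (S_nonneg m (hnn (Fin.last m)))
  calc ∑ i ∈ Finset.univ.erase (Fin.last m),
        S (m : ℤ) (Function.update lam i 0) * S l (Function.update lam i 0)
      ≤ (Finset.univ.erase (Fin.last m)).card •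
          (S (m : ℤ) (Function.update lam (Fin.last m) 0)
            * S l (Function.update lam (Fin.last m) 0)) :=
        Finset.sum_le_card_nsmul _ _ _ hbound
    _ = (m : ℝ) * _ := by
        rw [Finset.card_erase_of_mem (Finset.mem_univ _)]
        simp [nsmul_eq_mul]
end

section
/- If λ_1 ≥ λ_2 ≥ ... ≥ λ_n > 0, then for each i with 2 ≤ i ≤ n: S_{n-1;i}(λ) · S_{l;i}(λ) ≤ S_{n-1;n}(λ) · S_{l;n}(λ), where S_{m;i} denotes S_m with λ_i set to 0. -/
open Finset

lemma Snonneg' {n k : ℕ} (f : Fin n → ℝ) (h : ∀ a, 0 ≤ f a) :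
    0 ≤ ∑ A ∈ powersetCard k (Finset.univ : Finset (Fin n)), ∏ a ∈ A, f a :=
  Finset.sum_nonneg fun _ _ => Finset.prod_nonneg fun a _ => h a

lemma Smono' {n k : ℕ} (lam : Fin n → ℝ) (hnn : ∀ a, 0 ≤ lam a)
    (i j : Fin n) (hij : lam j ≤ lam i) :
    ∑ A ∈ powersetCard k (Finset.univ : Finset (Fin n)), ∏ a ∈ A, Function.update lam i 0 a
      ≤ ∑ A ∈ powersetCard k (Finset.univ : Finset (Fin n)), ∏ a ∈ A, Function.update lam j 0 a := by
  classical
  have hpt : ∀ a, Function.update lam i 0 a ≤ Function.update lam j 0 (Equiv.swap i j a) := by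
    intro a
    by_cases hai : a = i
    · subst hai; rw [Equiv.swap_apply_left]; simp
    by_cases haj : a = j
    · subst haj
      rw [Equiv.swap_apply_right, Function.update_of_ne hai, Function.update_of_ne (fun h => hai h.symm)]
      exact hij
    · rw [Equiv.swap_apply_of_ne_of_ne hai haj, Function.update_of_ne hai,
        Function.update_of_ne haj]
  have hnn' : ∀ a, 0 ≤ Function.update lam i 0 a := by
    intro a
    by_cases hai : a = i
    · subst hai; simp
    · rw [Function.update_of_ne hai]; exact hnn a
  have hstep : ∑ A ∈ powersetCard k (Finset.univ : Finset (Fin n)),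
        ∏ a ∈ A, Function.update lam i 0 a
      ≤ ∑ A ∈ powersetCard k (Finset.univ : Finset (Fin n)),
        ∏ a ∈ A, Function.update lam j 0 (Equiv.swap i j a) :=
    Finset.sum_le_sum fun A _ =>
      Finset.prod_le_prod (fun a _ => hnn' a) (fun a _ => hpt a)
  refine hstep.trans (le_of_eq ?_)
  refine Finset.sum_bij' (fun A _ => A.image (Equiv.swap i j))
    (fun B _ => B.image (Equiv.swap i j)) ?_ ?_ ?_ ?_ ?_
  · intro A hA
    rw [Finset.mem_powersetCard_univ] at hA ⊢
    rw [Finset.card_image_of_injective _ (Equiv.injective _)]; exact hA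
  · intro B hB
    rw [Finset.mem_powersetCard_univ] at hB ⊢
    rw [Finset.card_image_of_injective _ (Equiv.injective _)]; exact hB
  · intro A _
    ext x
    simp only [Finset.image_image, Finset.mem_image, Function.comp_apply, Equiv.swap_apply_self]
    exact ⟨fun ⟨a, ha, h⟩ => h ▸ ha, fun h => ⟨x, h, rfl⟩⟩
  · intro B _
    ext x
    simp only [Finset.image_image, Finset.mem_image, Function.comp_apply, Equiv.swap_apply_self]
    exact ⟨fun ⟨a, ha, h⟩ => h ▸ ha, fun h => ⟨x, h, rfl⟩⟩
  · intro A _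
    exact (Finset.prod_image fun a _ b _ h => (Equiv.injective _) h).symm

theorem stmt6 (m : ℕ) (hm : 1 ≤ m) (lam : Fin (m + 1) → ℝ)
    (hdec : ∀ i j : Fin (m + 1), i ≤ j → lam j ≤ lam i) (hpos : ∀ i, 0 < lam i)
    (l : ℤ) (hl0 : 0 ≤ l) (hln : l < m + 1) (i : Fin (m + 1)) (hi : i ≠ 0) :
    S (m : ℤ) (Function.update lam i 0) * S l (Function.update lam i 0)
      ≤ S (m : ℤ) (Function.update lam (Fin.last m) 0)
          * S l (Function.update lam (Fin.last m) 0) := by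
  have hnn : ∀ a, 0 ≤ lam a := fun a => (hpos a).le
  have hle : lam (Fin.last m) ≤ lam i := hdec i (Fin.last m) (Fin.le_last i)
  have hupd : ∀ (j : Fin (m + 1)) (a : Fin (m + 1)), 0 ≤ Function.update lam j 0 a := by
    intro j a
    by_cases h : a = j
    · subst h; simp
    · rw [Function.update_of_ne h]; exact hnn a
  simp only [S, if_pos (Int.ofNat_nonneg m), if_pos hl0]
  exact mul_le_mul (Smono' lam hnn i (Fin.last m) hle) (Smono' lam hnn i (Fin.last m) hle)
    (Snonneg' _ (hupd i)) (Snonneg' _ (hupd (Fin.last m)))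
end

section
/- Let λ ∈ ℝ^n with all entries positive, λ_1 the largest entry, and 1 ≤ l < n. Then for each i ≠ 1: λ_1 · (S_{n-2;1i}(λ) · S_l(λ) − S_n(λ) · S_{l-2;1i}(λ)) = S_{n-1;i}(λ) · S_{l;i}(λ) + S_n(λ) · S_{l-1;1i}(λ). -/
open Finset

/- Expanding `S_l(λ)` along the coordinate `i` gives `S_l(λ) = S_{l;i} + λ_i S_{l-1;i}`. Applied
along `i` and then along `1`, this rewrites `S_n` as `λ_i λ_1 S_{n-2;1i}` and `S_l`, `S_{l;i}`,
`S_{l-1;i}` in terms of `S_{·;1i}`, using that `S_k` vanishes as soon as `λ` has more than `n - k`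
zero entries (so `S_{n;i} = 0` and `S_{n-1;1i} = 0`). The identity then becomes a ring identity. -/

theorem sum_powersetCard_succ_prod_insert {ι R : Type*} [DecidableEq ι] [CommSemiring R]
    {s : Finset ι} {i : ι} (hi : i ∉ s) (f : ι → R) (k : ℕ) :
    ∑ A ∈ powersetCard (k + 1) (insert i s), ∏ j ∈ A, f j =
      ∑ A ∈ powersetCard (k + 1) s, ∏ j ∈ A, f j + f i * ∑ A ∈ powersetCard k s, ∏ j ∈ A, f j := by
  rw [powersetCard_succ_insert hi, sum_union, sum_image, mul_sum]
  · congr 1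
    refine sum_congr rfl fun A hA => prod_insert fun hiA => hi ?_
    exact (mem_powersetCard.mp hA).1 hiA
  · intro A hA B hB hAB
    have hiA : i ∉ A := fun h => hi ((mem_powersetCard.mp hA).1 h)
    have hiB : i ∉ B := fun h => hi ((mem_powersetCard.mp hB).1 h)
    simpa [erase_insert hiA, erase_insert hiB] using congrArg (erase · i) hAB
  · refine disjoint_left.mpr fun A hA hA' => ?_
    obtain ⟨B, -, rfl⟩ := mem_image.mp hA'
    exact hi ((mem_powersetCard.mp hA).1 (mem_insert_self i B))

theorem sum_powersetCard_prod_update_zero {ι R : Type*} [DecidableEq ι] [CommSemiring R]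
    (s : Finset ι) (f : ι → R) (i : ι) (k : ℕ) :
    ∑ A ∈ powersetCard k s, ∏ j ∈ A, Function.update f i 0 j =
      ∑ A ∈ powersetCard k (s.erase i), ∏ j ∈ A, f j := by
  rw [← sum_subset (powersetCard_mono (erase_subset i s))]
  · refine sum_congr rfl fun A hA => prod_update_of_notMem (fun hiA => notMem_erase i s ((mem_powersetCard.mp hA).1 hiA)) _ _
  · intro A hA hA'
    have hiA : i ∈ A := by
      by_contra hiA
      exact hA' (mem_powersetCard.mpr
        ⟨fun j hj => mem_erase.mpr ⟨ne_of_mem_of_not_mem hj hiA, (mem_powersetCard.mp hA).1 hj⟩,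
          (mem_powersetCard.mp hA).2⟩)
    rw [prod_update_of_mem hiA, zero_mul]

section ElementarySymmetric

variable {n : ℕ}

theorem S_natCast (k : ℕ) (f : Fin n → ℝ) :
    S k f = ∑ A ∈ powersetCard k univ, ∏ j ∈ A, f j := by
  simp [S]

theorem S_eq_add_mul_update_zero (l : ℤ) (f : Fin n → ℝ) (i : Fin n) :
    S l f = S l (Function.update f i 0) + f i * S (l - 1) (Function.update f i 0) := by
  obtain hl | rfl | ⟨k, rfl⟩ : l < 0 ∨ l = 0 ∨ ∃ k : ℕ, l = k + 1 :=
    (lt_trichotomy l 0).imp_right (Or.imp_right fun h => ⟨(l - 1).toNat, by omega⟩)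
  · simp only [S, if_neg (not_le.mpr hl), if_neg (show ¬0 ≤ l - 1 by omega), mul_zero, add_zero]
  · simp [S]
  · have hsucc : (k : ℤ) + 1 = (k + 1 : ℕ) := by push_cast; rfl
    rw [add_sub_cancel_right, hsucc, S_natCast, S_natCast, S_natCast,
      sum_powersetCard_prod_update_zero, sum_powersetCard_prod_update_zero,
      ← sum_powersetCard_succ_prod_insert (notMem_erase i univ), insert_erase (mem_univ i)]

theorem S_eq_zero_of_forall_mem_eq_zero {f : Fin n → ℝ} {s : Finset (Fin n)}
    (hs : ∀ j ∈ s, f j = 0) {k : ℤ} (hk : n < k + #s) : S k f = 0 := by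
  unfold S
  split_ifs with hk0
  · refine sum_eq_zero fun A hA => ?_
    have hcard : #(univ : Finset (Fin n)) < #A + #s := by
      rw [(mem_powersetCard.mp hA).2, card_univ, Fintype.card_fin]
      omega
    obtain ⟨j, hj⟩ := inter_nonempty_of_card_lt_card_add_card (subset_univ A) (subset_univ s) hcard
    exact prod_eq_zero (mem_inter.mp hj).1 (hs j (mem_inter.mp hj).2)
  · rfl

end ElementarySymmetric

theorem stmt8_general (m : ℕ) (lam : Fin (m + 2) → ℝ) (l : ℤ)
    (i : Fin (m + 2)) (hi : i ≠ 0) :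
    lam 0 * (S (m : ℤ) (Function.update (Function.update lam 0 0) i 0) * S l lam
        - S ((m : ℤ) + 2) lam * S (l - 2) (Function.update (Function.update lam 0 0) i 0))
      = S ((m : ℤ) + 1) (Function.update lam i 0) * S l (Function.update lam i 0)
        + S ((m : ℤ) + 2) lam
          * S (l - 1) (Function.update (Function.update lam 0 0) i 0) := by
  set μ := Function.update lam i 0 with hμ
  set ν := Function.update (Function.update lam 0 0) i 0 with hν
  have hμν : Function.update μ 0 0 = ν := Function.update_comm hi _ _ _
  have hμ0 : μ 0 = lam 0 := Function.update_of_ne hi.symm _ _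
  have hμ_top : S ((m : ℤ) + 2) μ = 0 :=
    S_eq_zero_of_forall_mem_eq_zero (s := {i}) (by simp [hμ]) (by simp)
  have hν_top : S ((m : ℤ) + 1) ν = 0 :=
    S_eq_zero_of_forall_mem_eq_zero (s := {0, i}) (by simp [hν, Function.update_apply])
      (by rw [card_pair hi.symm]; push_cast; omega)
  have expand_i (k : ℤ) := S_eq_add_mul_update_zero k lam i
  have expand_0 (k : ℤ) : S k μ = S k ν + lam 0 * S (k - 1) ν := by
    rw [← hμν, ← hμ0]; exact S_eq_add_mul_update_zero k μ 0
  rw [expand_i, expand_i ((m : ℤ) + 2), hμ_top, show (m : ℤ) + 2 - 1 = m + 1 by ring,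
    expand_0 ((m : ℤ) + 1), hν_top, show (m : ℤ) + 1 - 1 = m by ring, expand_0 l, expand_0 (l - 1),
    show l - 1 - 1 = l - 2 by ring]
  ring

theorem stmt8 (m : ℕ) (lam : Fin (m + 2) → ℝ) (hpos : ∀ j, 0 < lam j)
    (hmax : ∀ j, lam j ≤ lam 0) (l : ℤ) (hl1 : 1 ≤ l) (hln : l < m + 2)
    (i : Fin (m + 2)) (hi : i ≠ 0) :
    lam 0 * (S (m : ℤ) (Function.update (Function.update lam 0 0) i 0) * S l lam
        - S ((m : ℤ) + 2) lam * S (l - 2) (Function.update (Function.update lam 0 0) i 0))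
      = S ((m : ℤ) + 1) (Function.update lam i 0) * S l (Function.update lam i 0)
        + S ((m : ℤ) + 2) lam
          * S (l - 1) (Function.update (Function.update lam 0 0) i 0) :=
  stmt8_general m lam l i hi
end
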